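/- arXiv:1712.06033 — 2 statements merged into one kernel-verified Lean document; each statement's English description precedes it below -/
import Mathlib

section
/- Let P be a positive opetope and P^{op} the dual opetope obtained by interchanging γ and δ on 1-dimensional faces. Then: the sets of flags and p-flags of P and P^{op} coincide; for a flag of dimension k > 1, sgn^{P^{op}}(x⃗) = −sgn^P(x⃗); the pencil over a 0-face carries the reverse linear order while the pencil over a face of positive dimension carries the same order; and the flag order on maximal flags of P^{op} is the reverse of that of P. -/
open scoped Classical

structure PHg where
  Face : ℕ → Type
  fin : ∀ k, Finite (Face k)
  γ : ∀ k, Face (k+1) → Face k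
  δ : ∀ k, Face (k+1) → Face k → Prop
  δ_total : ∀ k a, ∃ x, δ k a x
  δ0_fun : ∀ (a : Face 1) (x y : Face 0), δ 0 a x → δ 0 a y → x = y
  bounded : ∃ n, ∀ k, n < k → IsEmpty (Face k)

abbrev PHg.FaceS (S : PHg) : Type := Σ k, S.Face k

/-- The codomain operation, viewed on faces of arbitrary dimension
(identity in dimension 0). -/
def gammaS (S : PHg) : S.FaceS → S.FaceS
  | ⟨0, x⟩ => ⟨0, x⟩
  | ⟨k+1, x⟩ => ⟨k, S.γ k x⟩

/-- `x ∈ δ(q)`. -/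
def inDelta (S : PHg) (x q : S.FaceS) : Prop :=
  match q with
  | ⟨0, _⟩ => False
  | ⟨k+1, a⟩ => ∃ h : x.1 = k, S.δ k a (h ▸ x.2)

/-- `x = γ(q)` (for `q` of positive dimension). -/
def inGammaS (S : PHg) (x q : S.FaceS) : Prop := 0 < q.1 ∧ gammaS S q = x

/-- `x ∈ ∂(q) = {γ(q)} ∪ δ(q)`. -/
def inBoundary (S : PHg) (x q : S.FaceS) : Prop := inGammaS S x q ∨ inDelta S x q

def covPlus (S : PHg) (a b : S.FaceS) : Prop :=
  ∃ α, inDelta S a α ∧ gammaS S α = b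

/-- The upper order `<⁺`. -/
def ltPlus (S : PHg) : S.FaceS → S.FaceS → Prop := Relation.TransGen (covPlus S)

def lePlus (S : PHg) (a b : S.FaceS) : Prop := a = b ∨ ltPlus S a b

def perpPlus (S : PHg) (a b : S.FaceS) : Prop := ltPlus S a b ∨ ltPlus S b a

def covMinus (S : PHg) (a b : S.FaceS) : Prop := 0 < a.1 ∧ inDelta S (gammaS S a) b

/-- The lower order `<⁻`. -/
def ltMinus (S : PHg) : S.FaceS → S.FaceS → Prop := Relation.TransGen (covMinus S)

def perpMinus (S : PHg) (a b : S.FaceS) : Prop := ltMinus S a b ∨ ltMinus S b a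

/-- Iterated codomain `γ^{(k)}`. -/
def gammaIter (S : PHg) (k : ℕ) (p : S.FaceS) : S.FaceS := (gammaS S)^[p.1 - k] p

/-- `X` is a `<⁺`-interval. -/
def IntervalPlus (S : PHg) (X : Set S.FaceS) : Prop :=
  X = ∅ ∨ ∃ x0 x1, lePlus S x0 x1 ∧ X = {x | lePlus S x0 x ∧ lePlus S x x1}

def hasDim (S : PHg) (n : ℕ) : Prop :=
  Nonempty (S.Face n) ∧ ∀ k, n < k → IsEmpty (S.Face k)

/-- A positive opetope: a nonempty positive hypergraph satisfying globularity,
strictness, disjointness, pencil linearity, and having at most one face outside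
`δ(S_{k+1})` in each dimension. -/
structure IsOpetope (S : PHg) : Prop where
  ne : Nonempty (S.Face 0)
  glob_gamma : ∀ a : S.FaceS, 2 ≤ a.1 →
    ({gammaS S (gammaS S a)} : Set S.FaceS) =
      {x | ∃ y, inDelta S y a ∧ gammaS S y = x} \ {x | ∃ y, inDelta S y a ∧ inDelta S x y}
  glob_delta : ∀ a : S.FaceS, 2 ≤ a.1 →
    {x | inDelta S x (gammaS S a)} =
      {x | ∃ y, inDelta S y a ∧ inDelta S x y} \ {x | ∃ y, inDelta S y a ∧ gammaS S y = x}
  strict : ∀ a, ¬ ltPlus S a a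
  linear0 : ∀ a b : S.FaceS, a.1 = 0 → b.1 = 0 → a = b ∨ perpPlus S a b
  disj : ∀ a b : S.FaceS, 0 < a.1 → ¬ (perpMinus S a b ∧ perpPlus S a b)
  pencil_gamma : ∀ x a b, inGammaS S x a → inGammaS S x b → a = b ∨ perpPlus S a b
  pencil_delta : ∀ x a b, inDelta S x a → inDelta S x b → a = b ∨ perpPlus S a b
  size_le_one : ∀ k (a b : S.Face k),
    (¬ ∃ α : S.Face (k+1), S.δ k α a) → (¬ ∃ α : S.Face (k+1), S.δ k α b) → a = b
/-- A restricted flag from dimension `m` down to dimension `l`,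
encoded as a function `ℕ → S.FaceS` (entries outside `[l,m]` are irrelevant). -/
def IsRFlag (S : PHg) (m l : ℕ) (F : ℕ → S.FaceS) : Prop :=
  (∀ i, l ≤ i → i ≤ m → (F i).1 = i) ∧
  (∀ i, l ≤ i → i < m → inBoundary S (F i) (F (i+1)))

/-- The pencil order `≺ₓ` on the pencil over `x`. -/
def pencilLt (S : PHg) (x a b : S.FaceS) : Prop :=
  (inGammaS S x b ∧ inDelta S x a) ∨
  (inDelta S x a ∧ inDelta S x b ∧ ltPlus S a b) ∨
  (inGammaS S x a ∧ inGammaS S x b ∧ ltPlus S b a)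

/-- The sign of the flag segment `[F j, …, F l]`. -/
noncomputable def sgnSeg (S : PHg) (l : ℕ) (F : ℕ → S.FaceS) : ℕ → ℤ
  | 0 => 1
  | j+1 => if l ≤ j ∧ inDelta S (F j) (F (j+1)) then -(sgnSeg S l F j) else sgnSeg S l F j

/-- The flag order `◁` on flags from dimension `m` down to `l`. -/
def flagLt (S : PHg) (l m : ℕ) (F G : ℕ → S.FaceS) : Prop :=
  ∃ k, l ≤ k ∧ k ≤ m ∧ (∀ i, l ≤ i → i < k → F i = G i) ∧ F k ≠ G k ∧
    ((k = 0 ∧ ltPlus S (G 0) (F 0)) ∨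
     (0 < k ∧ sgnSeg S l F (k-1) = 1 ∧ pencilLt S (F (k-1)) (F k) (G k)) ∨
     (0 < k ∧ sgnSeg S l F (k-1) = -1 ∧ pencilLt S (F (k-1)) (G k) (F k)))

/-- `i` is the low level `ll` of the flag `F` (with top dimension `n`). -/
def LowLevelT (S : PHg) (n : ℕ) (F : ℕ → S.FaceS) (i : ℕ) : Prop :=
  i + 2 ≤ n ∧ inDelta S (F (i+1)) (F (i+2)) ∧
    ∀ j, i < j → j + 2 ≤ n → ¬ inDelta S (F (j+1)) (F (j+2))

/-- Membership in `Flags[t / b]`, flags from top face `t` (dim `m`) to bottom face `b` (dim `l`). -/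
def MemFlags (S : PHg) (l m : ℕ) (t b : S.FaceS) (F : ℕ → S.FaceS) : Prop :=
  IsRFlag S m l F ∧ F m = t ∧ F l = b

def EqOnFl {α : Type*} (l m : ℕ) (F G : ℕ → α) : Prop :=
  ∀ i, l ≤ i → i ≤ m → F i = G i

/-- `G` is the successor of `F` in `Flags[t / b]` with respect to the flag order. -/
def SuccFl (S : PHg) (l m : ℕ) (t b : S.FaceS) (F G : ℕ → S.FaceS) : Prop :=
  MemFlags S l m t b F ∧ MemFlags S l m t b G ∧ flagLt S l m F G ∧
  ∀ H, MemFlags S l m t b H → flagLt S l m F H → (EqOnFl l m G H ∨ flagLt S l m G H)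
/-- The dual positive hypergraph: `γ` and `δ` interchanged on faces of dimension 1. -/
noncomputable def PHg.dual (S : PHg) : PHg where
  Face := S.Face
  fin := S.fin
  γ := fun k => match k with
    | 0 => fun a => Classical.choose (S.δ_total 0 a)
    | k+1 => S.γ (k+1)
  δ := fun k => match k with
    | 0 => fun a x => S.γ 0 a = x
    | k+1 => S.δ (k+1)
  δ_total := fun k => match k with
    | 0 => fun a => ⟨S.γ 0 a, rfl⟩
    | k+1 => fun a => S.δ_total (k+1) a
  δ0_fun := fun _ _ _ hx hy => hx.symm.trans hy
  bounded := S.bounded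


/-!
Dualising changes incidences only between 0-faces and 1-faces: a 0-face lies in `δ(a)` in
`P^op` iff it is `γ(a)` in `P`, and conversely, while every incidence of a face of positive
dimension is untouched. Hence boundaries and flags are unchanged, `<⁺` is unchanged on faces
of positive dimension and reversed on 0-faces, and pencils over 0-faces are reversed.
The sign of a flag counts its `δ`-incidences; only the bottom one `F 0 ∈ ∂(F 1)` changes,
and by strictness `F 0` is exactly one of `γ(F 1)`, `δ(F 1)`, so the sign flips. Comparing
two maximal flags at their first difference `k` then reverses `◁`: for `k = 0` because `<⁺`
is reversed on 0-faces, for `k = 1` because the pencil over a 0-face is reversed, and for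
`k ≥ 2` because the sign flips while the pencil order is unchanged.
-/

theorem Relation.transGen_congr_of_invariant {α : Type*} {r s : α → α → Prop}
    {p : α → Prop} (hrs : ∀ a b, p a → (r a b ↔ s a b)) (hr : ∀ a b, p a → r a b → p b) {a b : α}
    (ha : p a) : Relation.TransGen r a b ↔ Relation.TransGen s a b := by
  have transfer : ∀ {r s : α → α → Prop}, (∀ a b, p a → r a b → s a b ∧ p b) →
      ∀ {b}, Relation.TransGen r a b → Relation.TransGen s a b ∧ p b := by
    intro r s h b hab
    induction hab with
    | single hab => exact (h _ _ ha hab).imp .single id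
    | tail _ hbc ih => exact (h _ _ ih.2 hbc).imp ih.1.tail id
  exact ⟨fun h => (transfer (fun a b ha h => ⟨(hrs a b ha).1 h, hr a b ha h⟩) h).1,
    fun h => (transfer (fun a b ha h => ⟨(hrs a b ha).2 h, hr a b ha ((hrs a b ha).2 h)⟩)
      h).1⟩

section Dimension

variable {S : PHg} {x q : S.FaceS}

lemma dim_add_one_of_inDelta (h : inDelta S x q) : x.1 + 1 = q.1 := by
  obtain ⟨_ | k, q⟩ := q
  · exact h.elim
  · obtain ⟨hx, -⟩ := h
    simp [hx]

lemma dim_add_one_of_inGammaS (h : inGammaS S x q) : x.1 + 1 = q.1 := by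
  obtain ⟨hq, rfl⟩ := h
  obtain ⟨_ | k, q⟩ := q
  · exact absurd hq (lt_irrefl 0)
  · rfl

lemma dim_add_one_of_inBoundary (h : inBoundary S x q) : x.1 + 1 = q.1 :=
  h.elim dim_add_one_of_inGammaS dim_add_one_of_inDelta

lemma dim_pos_of_inBoundary (h : inBoundary S x q) : 0 < q.1 :=
  dim_add_one_of_inBoundary h ▸ x.1.succ_pos

lemma covPlus_iff {a b : S.FaceS} : covPlus S a b ↔ ∃ α, inDelta S a α ∧ inGammaS S b α :=
  exists_congr fun α => and_congr_right fun h =>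
    ⟨fun hb => ⟨by have := dim_add_one_of_inDelta h; omega, hb⟩, And.right⟩

lemma dim_eq_of_covPlus {a b : S.FaceS} (h : covPlus S a b) : a.1 = b.1 := by
  obtain ⟨α, ha, hb⟩ := covPlus_iff.1 h
  have := dim_add_one_of_inDelta ha
  have := dim_add_one_of_inGammaS hb
  omega

lemma not_inGammaS_and_inDelta (hstrict : ∀ a, ¬ ltPlus S a a) :
    ¬ (inGammaS S x q ∧ inDelta S x q) := fun ⟨hγ, hδ⟩ =>
  hstrict x (.single (covPlus_iff.2 ⟨q, hδ, hγ⟩))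

end Dimension

section Dual

variable {S : PHg} {x a b : S.FaceS}

lemma inDelta_dual_of_two_le (ha : 2 ≤ a.1) : inDelta S.dual x a ↔ inDelta S x a := by
  obtain ⟨_ | _ | k, a⟩ := a
  · simp at ha
  · simp at ha
  · rfl

lemma inGammaS_dual_of_two_le (ha : 2 ≤ a.1) : inGammaS S.dual x a ↔ inGammaS S x a := by
  obtain ⟨_ | _ | k, a⟩ := a
  · simp at ha
  · simp at ha
  · rfl

lemma inDelta_dual_of_dim_eq_one (ha : a.1 = 1) : inDelta S.dual x a ↔ inGammaS S x a := by
  obtain ⟨k, a⟩ := a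
  obtain rfl : k = 1 := ha
  obtain ⟨j, x⟩ := x
  constructor
  · rintro ⟨hj, h⟩
    obtain rfl : j = 0 := hj
    exact ⟨one_pos, congrArg _ h⟩
  · rintro ⟨-, h⟩
    cases h
    exact ⟨rfl, rfl⟩

lemma inGammaS_dual_of_dim_eq_one (ha : a.1 = 1) : inGammaS S.dual x a ↔ inDelta S x a := by
  obtain ⟨k, a⟩ := a
  obtain rfl : k = 1 := ha
  obtain ⟨j, x⟩ := x
  have hchoose := Classical.choose_spec (S.δ_total 0 a)
  constructor
  · rintro ⟨-, h⟩
    cases h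
    exact ⟨rfl, hchoose⟩
  · rintro ⟨hj, h⟩
    obtain rfl : j = 0 := hj
    exact ⟨one_pos, congrArg _ (S.δ0_fun a _ _ hchoose h)⟩

lemma inDelta_dual_of_dim_eq_zero (hx : x.1 = 0) : inDelta S.dual x a ↔ inGammaS S x a := by
  by_cases ha : a.1 = 1
  · exact inDelta_dual_of_dim_eq_one ha
  · refine iff_of_false (fun h => ha ?_) (fun h => ha ?_)
    · have := dim_add_one_of_inDelta h; omega
    · have := dim_add_one_of_inGammaS h; omega

lemma inGammaS_dual_of_dim_eq_zero (hx : x.1 = 0) : inGammaS S.dual x a ↔ inDelta S x a := by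
  by_cases ha : a.1 = 1
  · exact inGammaS_dual_of_dim_eq_one ha
  · refine iff_of_false (fun h => ha ?_) (fun h => ha ?_)
    · have := dim_add_one_of_inGammaS h; omega
    · have := dim_add_one_of_inDelta h; omega

lemma inDelta_dual_of_pos (hx : 0 < x.1) : inDelta S.dual x a ↔ inDelta S x a := by
  by_cases ha : 2 ≤ a.1
  · exact inDelta_dual_of_two_le ha
  · refine iff_of_false (fun h => ha ?_) (fun h => ha ?_)
    · have := dim_add_one_of_inDelta h; omega
    · have := dim_add_one_of_inDelta h; omega

lemma inGammaS_dual_of_pos (hx : 0 < x.1) : inGammaS S.dual x a ↔ inGammaS S x a := by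
  by_cases ha : 2 ≤ a.1
  · exact inGammaS_dual_of_two_le ha
  · refine iff_of_false (fun h => ha ?_) (fun h => ha ?_)
    · have := dim_add_one_of_inGammaS h; omega
    · have := dim_add_one_of_inGammaS h; omega

lemma inBoundary_dual : inBoundary S.dual x a ↔ inBoundary S x a := by
  rcases Nat.eq_zero_or_pos x.1 with hx | hx
  · simp only [inBoundary, inDelta_dual_of_dim_eq_zero hx,
      inGammaS_dual_of_dim_eq_zero hx, or_comm]
  · simp only [inBoundary, inDelta_dual_of_pos hx, inGammaS_dual_of_pos hx]

lemma covPlus_dual_of_dim_eq_zero (ha : a.1 = 0) : covPlus S.dual a b ↔ covPlus S b a := by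
  rw [covPlus_iff (S := S)]
  refine (covPlus_iff (S := S.dual)).trans (exists_congr fun α => ?_)
  refine (and_congr_left' (inDelta_dual_of_dim_eq_zero ha)).trans
    ((and_congr_right fun hα => inGammaS_dual_of_dim_eq_one ?_).trans and_comm)
  have := dim_add_one_of_inGammaS hα
  omega

lemma covPlus_dual_of_pos (ha : 0 < a.1) : covPlus S.dual a b ↔ covPlus S a b := by
  rw [covPlus_iff (S := S)]
  refine (covPlus_iff (S := S.dual)).trans (exists_congr fun α => ?_)
  refine (and_congr_left' (inDelta_dual_of_pos ha)).trans
    (and_congr_right fun hα => inGammaS_dual_of_two_le ?_)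
  have := dim_add_one_of_inDelta hα
  omega

lemma ltPlus_dual_of_dim_eq_zero (ha : a.1 = 0) : ltPlus S.dual a b ↔ ltPlus S b a := by
  rw [ltPlus, ltPlus, ← Relation.transGen_swap]
  exact Relation.transGen_congr_of_invariant (p := fun c : S.FaceS => c.1 = 0)
    (fun _ _ hc => covPlus_dual_of_dim_eq_zero hc)
    (fun _ _ hc h => (dim_eq_of_covPlus h).symm.trans hc) ha

lemma ltPlus_dual_of_pos (ha : 0 < a.1) : ltPlus S.dual a b ↔ ltPlus S a b :=
  Relation.transGen_congr_of_invariant (p := fun c : S.FaceS => 0 < c.1)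
    (fun _ _ hc => covPlus_dual_of_pos hc) (fun _ _ hc h => dim_eq_of_covPlus h ▸ hc) ha

lemma pencilLt_dual_of_dim_eq_zero (hx : x.1 = 0) (ha : 0 < a.1) (hb : 0 < b.1) :
    pencilLt S.dual x a b ↔ pencilLt S x b a := by
  simp only [pencilLt, inDelta_dual_of_dim_eq_zero hx, inGammaS_dual_of_dim_eq_zero hx,
    ltPlus_dual_of_pos ha, ltPlus_dual_of_pos hb]
  tauto

lemma pencilLt_dual_of_pos (hx : 0 < x.1) (ha : 0 < a.1) (hb : 0 < b.1) :
    pencilLt S.dual x a b ↔ pencilLt S x a b := by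
  simp only [pencilLt, inDelta_dual_of_pos hx, inGammaS_dual_of_pos hx,
    ltPlus_dual_of_pos ha, ltPlus_dual_of_pos hb]

end Dual

section Flags

variable {S : PHg} {m : ℕ} {F G : ℕ → S.FaceS}

lemma isRFlag_dual : IsRFlag S.dual m 0 F ↔ IsRFlag S m 0 F :=
  and_congr_right' <| forall₃_congr fun _ _ _ => inBoundary_dual

lemma IsRFlag.dim_pos (hF : IsRFlag S m 0 F) {i : ℕ} (hi : 0 < i) (him : i ≤ m) :
    0 < (F i).1 := by
  rwa [hF.1 i i.zero_le him]

lemma IsRFlag.inDelta_dual_of_pos (hF : IsRFlag S m 0 F) {i : ℕ} (hi : 0 < i) (him : i ≤ m)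
    (a : S.FaceS) : inDelta S.dual (F i) a ↔ inDelta S (F i) a :=
  _root_.inDelta_dual_of_pos (hF.dim_pos hi him)

lemma lowLevelT_dual (hF : IsRFlag S m 0 F) (i : ℕ) :
    LowLevelT S.dual m F i ↔ LowLevelT S m F i :=
  and_congr_right fun hi => and_congr (hF.inDelta_dual_of_pos i.succ_pos (by omega) _) <|
    forall₂_congr fun j _ => forall_congr' fun hj =>
      not_congr (hF.inDelta_dual_of_pos j.succ_pos (by omega) _)

lemma sgnSeg_congr {l : ℕ} : ∀ j, (∀ i ≤ j, F i = G i) → sgnSeg S l F j = sgnSeg S l G j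
  | 0, _ => rfl
  | j + 1, h => by
    simp only [sgnSeg, sgnSeg_congr j fun i hi => h i (by omega), h j (by omega), h (j + 1) le_rfl]

lemma sgnSeg_dual (hstrict : ∀ a, ¬ ltPlus S a a) (hF : IsRFlag S m 0 F) {j : ℕ} (hj : 1 ≤ j)
    (hjm : j ≤ m) : sgnSeg S.dual 0 F j = -sgnSeg S 0 F j := by
  induction j, hj using Nat.le_induction with
  | base =>
    have hflip : inDelta S.dual (F 0) (F 1) ↔ ¬ inDelta S (F 0) (F 1) := by
      rw [inDelta_dual_of_dim_eq_zero (hF.1 0 le_rfl (by omega))]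
      exact ⟨fun hγ hδ => not_inGammaS_and_inDelta hstrict ⟨hγ, hδ⟩,
        (hF.2 0 le_rfl hjm).resolve_right⟩
    simp only [sgnSeg, le_refl, true_and, hflip]
    split_ifs <;> rfl
  | succ j hj ih =>
    simp only [sgnSeg, zero_le, true_and, hF.inDelta_dual_of_pos hj (by omega),
      ih (by omega)]
    split_ifs <;> rfl

lemma flagLt_dual (hstrict : ∀ a, ¬ ltPlus S a a) (hF : IsRFlag S m 0 F)
    (hG : IsRFlag S m 0 G) : flagLt S.dual 0 m F G ↔ flagLt S 0 m G F := by
  refine exists_congr fun k => and_congr_right fun _ => and_congr_right fun hkn => ?_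
  refine (and_congr_right fun hagree => and_congr ne_comm ?_).trans
    (and_congr_left' (forall₃_congr fun _ _ _ => eq_comm))
  rcases k with _ | _ | k
  · simp only [lt_irrefl, false_and, or_false, true_and]
    exact ltPlus_dual_of_dim_eq_zero (hG.1 0 le_rfl m.zero_le)
  · simp only [zero_add, one_ne_zero, false_and, false_or, zero_lt_one, true_and,
      Nat.sub_self, sgnSeg, (by decide : (1 : ℤ) ≠ -1), or_false, hagree 0 le_rfl one_pos]
    exact pencilLt_dual_of_dim_eq_zero (hG.1 0 le_rfl m.zero_le) (hF.dim_pos one_pos hkn)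
      (hG.dim_pos one_pos hkn)
  · have hsgn : sgnSeg S.dual 0 F (k + 1) = -sgnSeg S 0 G (k + 1) := by
      rw [sgnSeg_dual hstrict hF k.succ_pos (by omega),
        sgnSeg_congr (k + 1) fun i hi => hagree i i.zero_le (by omega)]
    have hx : 0 < (G (k + 1)).1 := hG.dim_pos k.succ_pos (by omega)
    have hFk := hF.dim_pos (k + 1).succ_pos hkn
    have hGk := hG.dim_pos (k + 1).succ_pos hkn
    simp only [Nat.add_one_ne_zero, false_and, false_or, Nat.zero_lt_succ, true_and,
      Nat.add_one_sub_one, hsgn, hagree (k + 1) (k + 1).zero_le (by omega),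
      pencilLt_dual_of_pos hx hFk hGk, pencilLt_dual_of_pos hx hGk hFk, neg_eq_iff_eq_neg,
      neg_neg]
    exact or_comm

end Flags

theorem dual_flags_signs_pencils_order_general
    (S : PHg) (hS : IsOpetope S) (n : ℕ) :
    (∀ (m : ℕ) (F : ℕ → S.FaceS), IsRFlag S m 0 F ↔ IsRFlag S.dual m 0 F) ∧
    (∀ (m i : ℕ) (F : ℕ → S.FaceS),
      (IsRFlag S m 0 F ∧ (i + 1 = m ∨ LowLevelT S m F i)) ↔
      (IsRFlag S.dual m 0 F ∧ (i + 1 = m ∨ LowLevelT S.dual m F i))) ∧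
    (∀ (m : ℕ) (F : ℕ → S.FaceS), IsRFlag S m 0 F → 1 ≤ m →
      sgnSeg S.dual 0 F m = -(sgnSeg S 0 F m)) ∧
    (∀ x a : S.FaceS, inBoundary S x a ↔ inBoundary S.dual x a) ∧
    (∀ x a b : S.FaceS, x.1 = 0 → inBoundary S x a → inBoundary S x b →
      (pencilLt S.dual x a b ↔ pencilLt S x b a)) ∧
    (∀ x a b : S.FaceS, 0 < x.1 → inBoundary S x a → inBoundary S x b →
      (pencilLt S.dual x a b ↔ pencilLt S x a b)) ∧
    (∀ F G : ℕ → S.FaceS, IsRFlag S n 0 F → IsRFlag S n 0 G →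
      (flagLt S.dual 0 n F G ↔ flagLt S 0 n G F)) := by
  refine ⟨fun _ _ => isRFlag_dual.symm, fun _ i _ => ?_,
    fun _ _ hF hm => sgnSeg_dual hS.strict hF hm le_rfl,
    fun _ _ => inBoundary_dual.symm,
    fun _ _ _ hx ha hb => pencilLt_dual_of_dim_eq_zero hx (dim_pos_of_inBoundary ha)
      (dim_pos_of_inBoundary hb),
    fun _ _ _ hx ha hb => pencilLt_dual_of_pos hx (dim_pos_of_inBoundary ha)
      (dim_pos_of_inBoundary hb),
    fun _ _ hF hG => flagLt_dual hS.strict hF hG⟩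
  exact (and_congr_right fun hF => or_congr_right (lowLevelT_dual hF i).symm).trans
    (and_congr_left' isRFlag_dual.symm)

/-- Flags and p-flags of `P` and of its dual `P^op` coincide; the
sign of a flag of dimension `> 1` flips; the pencil over a 0-face carries the
reverse order while pencils over faces of positive dimension carry the same
order; and the flag order on maximal flags is reversed. -/
theorem dual_flags_signs_pencils_order
    (S : PHg) (hS : IsOpetope S) (n : ℕ) (hn : hasDim S n) :
    (∀ (m : ℕ) (F : ℕ → S.FaceS), IsRFlag S m 0 F ↔ IsRFlag S.dual m 0 F) ∧
    (∀ (m i : ℕ) (F : ℕ → S.FaceS),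
      (IsRFlag S m 0 F ∧ (i + 1 = m ∨ LowLevelT S m F i)) ↔
      (IsRFlag S.dual m 0 F ∧ (i + 1 = m ∨ LowLevelT S.dual m F i))) ∧
    (∀ (m : ℕ) (F : ℕ → S.FaceS), IsRFlag S m 0 F → 1 ≤ m →
      sgnSeg S.dual 0 F m = -(sgnSeg S 0 F m)) ∧
    (∀ x a : S.FaceS, inBoundary S x a ↔ inBoundary S.dual x a) ∧
    (∀ x a b : S.FaceS, x.1 = 0 → inBoundary S x a → inBoundary S x b →
      (pencilLt S.dual x a b ↔ pencilLt S x b a)) ∧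
    (∀ x a b : S.FaceS, 0 < x.1 → inBoundary S x a → inBoundary S x b →
      (pencilLt S.dual x a b ↔ pencilLt S x a b)) ∧
    (∀ F G : ℕ → S.FaceS, IsRFlag S n 0 F → IsRFlag S n 0 G →
      (flagLt S.dual 0 n F G ↔ flagLt S 0 n G F)) :=
  dual_flags_signs_pencils_order_general S hS n
end

section
/- Let P be a positive opetope, x⃗, x⃗' ∈ Cyl_h(P) two faces (flags or p-flags) with the same projection π_P(x⃗) = π_P(x⃗') = x_{k+1} ∈ P_{k+1}, and with δ(x⃗) = δ(x⃗') and γ(x⃗) = γ(x⃗'). Then x⃗ = x⃗'. -/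
open scoped Classical

/-- Faces of the cylinder: bottom flat faces `-p`, top flat faces `+p`,
and (punctured) flags encoded as functions `ℕ → Option S.FaceS`
(`none` outside the support resp. at the puncture). -/
inductive CylFace (S : PHg) : Type
  | neg : S.FaceS → CylFace S
  | pos : S.FaceS → CylFace S
  | fl : (ℕ → Option S.FaceS) → CylFace S

/-- `x` encodes a flag `[x_m, …, x_0]`. -/
def IsFlagFn (S : PHg) (m : ℕ) (x : ℕ → Option S.FaceS) : Prop :=
  (∀ j, m < j → x j = none) ∧
  (∀ j, j ≤ m → ∃ p, x j = some p ∧ p.1 = j) ∧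
  (∀ j, j < m → ∀ p q, x j = some p → x (j+1) = some q → inBoundary S p q)

noncomputable def sgnO (S : PHg) (x : ℕ → Option S.FaceS) : ℕ → ℤ
  | 0 => 1
  | j+1 => if ∃ p q, x j = some p ∧ x (j+1) = some q ∧ inDelta S p q
           then -(sgnO S x j) else sgnO S x j

def oPencil (S : PHg) (c a b : Option S.FaceS) : Prop :=
  ∃ c' a' b', c = some c' ∧ a = some a' ∧ b = some b' ∧ pencilLt S c' a' b'

/-- The flag order on flags with top dimension `m`, in the `Option`-encoding. -/
def flagLtO (S : PHg) (m : ℕ) (x y : ℕ → Option S.FaceS) : Prop :=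
  ∃ k, k ≤ m ∧ (∀ j, j < k → x j = y j) ∧ x k ≠ y k ∧
    ((k = 0 ∧ ∃ p q, x 0 = some p ∧ y 0 = some q ∧ ltPlus S q p) ∨
     (0 < k ∧ sgnO S x (k-1) = 1 ∧ oPencil S (x (k-1)) (x k) (y k)) ∨
     (0 < k ∧ sgnO S x (k-1) = -1 ∧ oPencil S (x (k-1)) (y k) (x k)))

def LowLevelO (S : PHg) (m : ℕ) (x : ℕ → Option S.FaceS) (i : ℕ) : Prop :=
  i + 2 ≤ m ∧ (∃ p q, x (i+1) = some p ∧ x (i+2) = some q ∧ inDelta S p q) ∧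
    ∀ j, i < j → j + 2 ≤ m →
      ¬ ∃ p q, x (j+1) = some p ∧ x (j+2) = some q ∧ inDelta S p q

/-- `x` encodes a punctured flag with top dimension `m` and puncture at level `i`
(either a high p-flag, `i = m-1`, or a low p-flag, `i = ll`). -/
def IsPFlagFn (S : PHg) (m i : ℕ) (x : ℕ → Option S.FaceS) : Prop :=
  i < m ∧ x i = none ∧ ∃ y, IsFlagFn S m y ∧ (∀ j, j ≠ i → x j = y j) ∧
    (i + 1 = m ∨ LowLevelO S m y i)

def IsFirstFlag (S : PHg) (m : ℕ) (x : ℕ → Option S.FaceS) : Prop :=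
  IsFlagFn S m x ∧ ∀ y, IsFlagFn S m y → y m = x m → (y = x ∨ flagLtO S m x y)

def IsLastFlag (S : PHg) (m : ℕ) (x : ℕ → Option S.FaceS) : Prop :=
  IsFlagFn S m x ∧ ∀ y, IsFlagFn S m y → y m = x m → (y = x ∨ flagLtO S m y x)

/-- keep the levels `< m` only. -/
def truncO {α : Type*} (m : ℕ) (x : ℕ → Option α) : ℕ → Option α :=
  fun j => if m ≤ j then none else x j

/-- puncture at level `i`. -/
def punctO {α : Type*} (i : ℕ) (x : ℕ → Option α) : ℕ → Option α :=
  fun j => if j = i then none else x j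

def oLeP (S : PHg) (o : Option S.FaceS) (t : S.FaceS) : Prop :=
  ∃ q, o = some q ∧ lePlus S q t

/-- the low p-flag `[p, γ(p), …, γ^{(l+2)}(p), t, 0, x_{l-1}, …, x_0]`. -/
def lowShape (S : PHg) (p : S.FaceS) (l : ℕ) (t : S.FaceS)
    (x : ℕ → Option S.FaceS) : ℕ → Option S.FaceS :=
  fun j => if p.1 < j then none
    else if l + 2 ≤ j then some (gammaIter S j p)
    else if j = l + 1 then some t
    else if j = l then none
    else x j

def starG1 (S : PHg) (i : ℕ) (x : ℕ → Option S.FaceS) (p : S.FaceS) : Prop :=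
  p.1 ≠ i ∧ x p.1 = some p

def starG2 (S : PHg) (i : ℕ) (x : ℕ → Option S.FaceS) (p : S.FaceS) : Prop :=
  i < p.1 ∧ ∃ t, inDelta S t (gammaIter S (i+2) p) ∧ oLeP S (x (i+1)) t

def starG3 (S : PHg) (i : ℕ) (x : ℕ → Option S.FaceS) (p : S.FaceS) : Prop :=
  i ≤ p.1 ∧ 0 < i ∧ ∃ t, inDelta S t (gammaIter S (i+1) p) ∧
    ∃ q, x (i+1) = some q ∧ lePlus S (gammaS S q) t

def starG4 (S : PHg) (i : ℕ) (x : ℕ → Option S.FaceS) (p : S.FaceS) : Prop :=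
  ∃ l t, l + 2 ≤ i ∧ l + 2 ≤ p.1 ∧ inDelta S t (gammaIter S (l+2) p) ∧ oLeP S (x (l+1)) t

def starG5 (S : PHg) (i : ℕ) (x : ℕ → Option S.FaceS) (p : S.FaceS) : Prop :=
  (0 < i ∧ ∃ q, x 0 = some q ∧ lePlus S (gammaIter S 0 p) q) ∨
  (i = 0 ∧ ∃ q, x 1 = some q ∧ ltPlus S (gammaIter S 0 p) (gammaS S q))

def starG6 (S : PHg) (i : ℕ) (x : ℕ → Option S.FaceS) (p : S.FaceS) : Prop :=
  (0 < i ∧ ∃ q, x 0 = some q ∧ ltPlus S q (gammaIter S 0 p)) ∨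
  (i = 0 ∧ ∃ q, x 1 = some q ∧ lePlus S (gammaS S q) (gammaIter S 0 p))

/-- The star operation `p ⋆ x⃗` for a punctured flag `x⃗` (top dimension `m`,
puncture at `i`), as a relation `StarP S m i x p φ` meaning `φ = p ⋆ x⃗`. -/
def StarP (S : PHg) (m i : ℕ) (x : ℕ → Option S.FaceS) (p : S.FaceS)
    (φ : CylFace S) : Prop :=
  (starG1 S i x p ∧ φ = CylFace.fl (truncO (p.1+1) x)) ∨
  (¬ starG1 S i x p ∧ starG2 S i x p ∧
    ∃ t, inDelta S t (gammaIter S (i+2) p) ∧ oLeP S (x (i+1)) t ∧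
      φ = CylFace.fl (lowShape S p i t x)) ∨
  (¬ starG1 S i x p ∧ ¬ starG2 S i x p ∧ starG3 S i x p ∧
    ∃ t, inDelta S t (gammaIter S (i+1) p) ∧
      (∃ q, x (i+1) = some q ∧ lePlus S (gammaS S q) t) ∧
      φ = CylFace.fl (lowShape S p (i-1) t x)) ∨
  (¬ starG1 S i x p ∧ ¬ starG2 S i x p ∧ ¬ starG3 S i x p ∧ starG4 S i x p ∧
    ∃ l t, l + 2 ≤ i ∧ l + 2 ≤ p.1 ∧ inDelta S t (gammaIter S (l+2) p) ∧
      oLeP S (x (l+1)) t ∧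
      (∀ l' t', l < l' → l' + 2 ≤ i → l' + 2 ≤ p.1 →
        ¬ (inDelta S t' (gammaIter S (l'+2) p) ∧ oLeP S (x (l'+1)) t')) ∧
      φ = CylFace.fl (lowShape S p l t x)) ∨
  (¬ starG1 S i x p ∧ ¬ starG2 S i x p ∧ ¬ starG3 S i x p ∧ ¬ starG4 S i x p ∧
    starG5 S i x p ∧ φ = CylFace.neg p) ∨
  (¬ starG1 S i x p ∧ ¬ starG2 S i x p ∧ ¬ starG3 S i x p ∧ ¬ starG4 S i x p ∧
    ¬ starG5 S i x p ∧ starG6 S i x p ∧ φ = CylFace.pos p)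

/-- The star operation `p ⋆ x⃗` for a (maximal, total) flag `F`,
as a relation `StarF S F p φ` meaning `φ = p ⋆ F`. -/
def StarF (S : PHg) (F : ℕ → S.FaceS) (p : S.FaceS) (φ : CylFace S) : Prop :=
  (p = F p.1 ∧ φ = CylFace.fl (fun j => if j ≤ p.1 then some (F j) else none)) ∨
  (p ≠ F p.1 ∧ 1 ≤ p.1 ∧ ltPlus S (F p.1) p ∧
    φ = CylFace.fl (fun j => if p.1 < j then none else if j = p.1 then some p
          else if j + 1 = p.1 then none else some (F j))) ∨
  (p ≠ F p.1 ∧ ¬ (1 ≤ p.1 ∧ ltPlus S (F p.1) p) ∧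
    ∃ l t, l + 2 ≤ p.1 ∧ inDelta S t (gammaIter S (l+2) p) ∧ lePlus S (F (l+1)) t ∧
      (∀ l' t', l < l' → l' + 2 ≤ p.1 →
        ¬ (inDelta S t' (gammaIter S (l'+2) p) ∧ lePlus S (F (l'+1)) t')) ∧
      φ = CylFace.fl (lowShape S p l t (fun j => some (F j)))) ∨
  (p ≠ F p.1 ∧ ¬ (1 ≤ p.1 ∧ ltPlus S (F p.1) p) ∧
    ¬ (∃ l t, l + 2 ≤ p.1 ∧ inDelta S t (gammaIter S (l+2) p) ∧ lePlus S (F (l+1)) t) ∧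
    lePlus S (gammaIter S 0 p) (F 0) ∧ φ = CylFace.neg p) ∨
  (p ≠ F p.1 ∧ ¬ (1 ≤ p.1 ∧ ltPlus S (F p.1) p) ∧
    ¬ (∃ l t, l + 2 ≤ p.1 ∧ inDelta S t (gammaIter S (l+2) p) ∧ lePlus S (F (l+1)) t) ∧
    ¬ lePlus S (gammaIter S 0 p) (F 0) ∧ ltPlus S (F 0) (gammaIter S 0 p) ∧
    φ = CylFace.pos p)

/-- Dimension of a cylinder face (number of non-dummy entries for (p-)flags). -/
noncomputable def cylDim (S : PHg) : CylFace S → ℕ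
  | CylFace.neg p => p.1
  | CylFace.pos p => p.1
  | CylFace.fl x => Nat.card {j : ℕ // (x j).isSome}

/-- Projection `π_P : Cyl(P) → P`. -/
noncomputable def cylProj (S : PHg) : CylFace S → Option S.FaceS
  | CylFace.neg p => some p
  | CylFace.pos p => some p
  | CylFace.fl x => x (sSup {j | (x j).isSome = true})

def IsCylFace (S : PHg) : CylFace S → Prop
  | CylFace.neg _ => True
  | CylFace.pos _ => True
  | CylFace.fl x => (∃ m, IsFlagFn S m x) ∨ (∃ m i, IsPFlagFn S m i x)

/-- `ψ = γ(φ)` in the cylinder hypergraph. -/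
def CylGamma (S : PHg) (ψ φ : CylFace S) : Prop :=
  match φ with
  | CylFace.neg p => 0 < p.1 ∧ ψ = CylFace.neg (gammaS S p)
  | CylFace.pos p => 0 < p.1 ∧ ψ = CylFace.pos (gammaS S p)
  | CylFace.fl x =>
    (∃ m, IsFlagFn S m x ∧
      ((m = 0 ∧ ∃ p, x 0 = some p ∧ ψ = CylFace.pos p) ∨
       (0 < m ∧ ψ = CylFace.fl (punctO (m-1) x)))) ∨
    (∃ m i, IsPFlagFn S m i x ∧
      (((i + 1 = m ∨ i + 2 = m) ∧
         ψ = CylFace.fl (fun j => if m ≤ j then none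
               else if j + 1 = m then (x m).map (gammaS S)
               else if j + 2 = m then none else x j)) ∨
       (i + 2 < m ∧ ψ = CylFace.fl (truncO m x))))

/-- `ψ ∈ δ(φ)` in the cylinder hypergraph. -/
def CylDelta (S : PHg) (ψ φ : CylFace S) : Prop :=
  match φ with
  | CylFace.neg p => ∃ q, inDelta S q p ∧ ψ = CylFace.neg q
  | CylFace.pos p => ∃ q, inDelta S q p ∧ ψ = CylFace.pos q
  | CylFace.fl x =>
    (∃ m, IsFlagFn S m x ∧
      ((m = 0 ∧ ∃ p, x 0 = some p ∧ ψ = CylFace.neg p) ∨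
       (0 < m ∧
         (ψ = CylFace.fl (truncO m x) ∨
          (IsFirstFlag S m x ∧ ∃ p, x m = some p ∧ ψ = CylFace.neg p) ∨
          (IsLastFlag S m x ∧ ∃ p, x m = some p ∧ ψ = CylFace.pos p) ∨
          (¬ IsFirstFlag S m x ∧ ¬ IsLastFlag S m x ∧
            ∃ i, LowLevelO S m x i ∧ ψ = CylFace.fl (punctO i x)))))) ∨
    (∃ m i, IsPFlagFn S m i x ∧
      ((∃ p q, x m = some q ∧ inDelta S p q ∧ StarP S m i x p ψ) ∨
       (i + 1 = m ∧ ψ = CylFace.fl (truncO m x))))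

/-- The least subset of the cylinder containing `φ0` and closed under `γ` and `δ`. -/
inductive InCyl (S : PHg) (φ0 : CylFace S) : CylFace S → Prop
  | base : InCyl S φ0 φ0
  | gam {φ ψ : CylFace S} : InCyl S φ0 φ → CylGamma S ψ φ → InCyl S φ0 ψ
  | del {φ ψ : CylFace S} : InCyl S φ0 φ → CylDelta S ψ φ → InCyl S φ0 ψ

/-- The subset `A` of the cylinder, with the induced `γ` and `δ`,
forms a positive opetope. -/
def SubCylOpetope (S : PHg) (A : CylFace S → Prop) : Prop :=
  ∃ (T : PHg) (e : ∀ k, T.Face k ≃ {φ : CylFace S // A φ ∧ cylDim S φ = k}),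
    IsOpetope T ∧
    ∀ (k : ℕ) (a : T.Face (k+1)) (b : T.Face k),
      (T.γ k a = b ↔ CylGamma S (e k b).1 (e (k+1) a).1) ∧
      (T.δ k a b ↔ CylDelta S (e k b).1 (e (k+1) a).1)

/-- `Option`-encoding of a total flag with top dimension `n`. -/
def toO (S : PHg) (n : ℕ) (F : ℕ → S.FaceS) : ℕ → Option S.FaceS :=
  fun j => if j ≤ n then some (F j) else none

/-- The intersection of two flags: dummy `0` wherever they differ. -/
noncomputable def interO (S : PHg) (n : ℕ) (F G : ℕ → S.FaceS) : ℕ → Option S.FaceS :=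
  fun j => if j ≤ n ∧ F j = G j then some (F j) else none

/-!
The codomain `γ` separates flags from punctured flags (for a flag it keeps the top face, for a
punctured flag it does not), and it recovers a punctured flag whose puncture lies below level
`k - 1`. For a flag, or a punctured flag with puncture at level `k`, the truncation below the top
lies in `δ`, and the `δ` of the other face can contain it only as that face's own truncation. Two
faces punctured at level `k - 1` can differ only at level `k`; there the truncation of each is a
star in `δ` of the other, which forces each of the two entries at level `k` to be `≤⁺` the other,
and strictness of `<⁺` makes them equal.
-/

lemma eq_of_truncO_eq {α : Type*} {m : ℕ} {x y : ℕ → Option α}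
    (hx : ∀ j, m < j → x j = none) (hy : ∀ j, m < j → y j = none) (htop : x m = y m)
    (h : truncO m x = truncO m y) : x = y := by
  funext j
  rcases lt_trichotomy j m with hj | rfl | hj
  · simpa [truncO, hj.not_ge] using congrFun h j
  · exact htop
  · rw [hx j hj, hy j hj]

section Cylinder

variable {S : PHg} {m i : ℕ} {x x' y : ℕ → Option S.FaceS}

lemma inDelta_dim {p q : S.FaceS} (h : inDelta S p q) : p.1 + 1 = q.1 := by
  obtain ⟨_ | d, a⟩ := q
  · exact h.elim
  · obtain ⟨hd, -⟩ := h
    simp [hd]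

lemma lePlus_antisymm (hS : IsOpetope S) {a b : S.FaceS} (hab : lePlus S a b)
    (hba : lePlus S b a) : a = b := by
  rcases hab with rfl | hab
  · rfl
  rcases hba with rfl | hba
  · rfl
  exact (hS.strict a (hab.trans hba)).elim

namespace IsFlagFn

lemma apply_eq_none (h : IsFlagFn S m x) {j : ℕ} (hj : m < j) : x j = none := h.1 j hj

lemma exists_apply_eq_some (h : IsFlagFn S m x) {j : ℕ} (hj : j ≤ m) :
    ∃ p : S.FaceS, x j = some p ∧ p.1 = j := h.2.1 j hj

lemma unique {m' : ℕ} (h : IsFlagFn S m x) (h' : IsFlagFn S m' x) : m = m' := by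
  by_contra hne
  wlog hlt : m < m' generalizing m m'
  · exact this h' h (Ne.symm hne) (by omega)
  obtain ⟨p, hp, -⟩ := h'.exists_apply_eq_some le_rfl
  simp [h.apply_eq_none hlt] at hp

end IsFlagFn

namespace IsPFlagFn

lemma apply_puncture (h : IsPFlagFn S m i x) : x i = none := h.2.1

lemma exists_apply_eq_some (h : IsPFlagFn S m i x) {j : ℕ} (hj : j ≤ m) (hji : j ≠ i) :
    ∃ p : S.FaceS, x j = some p ∧ p.1 = j := by
  obtain ⟨-, -, y, hy, hxy, -⟩ := h
  rw [hxy j hji]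
  exact hy.exists_apply_eq_some hj

lemma apply_eq_none (h : IsPFlagFn S m i x) {j : ℕ} (hj : m < j) : x j = none := by
  obtain ⟨-, hxi, y, hy, hxy, -⟩ := h
  rcases eq_or_ne j i with rfl | hji
  · exact hxi
  · rw [hxy j hji, hy.apply_eq_none hj]

lemma unique {m' i' : ℕ} (h : IsPFlagFn S m i x) (h' : IsPFlagFn S m' i' x) :
    m = m' ∧ i = i' := by
  have hm : m = m' := by
    by_contra hne
    wlog hlt : m < m' generalizing m m' i i'
    · exact this h' h (Ne.symm hne) (by omega)
    obtain ⟨p, hp, -⟩ := h'.exists_apply_eq_some le_rfl h'.1.ne'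
    simp [h.apply_eq_none hlt] at hp
  subst hm
  refine ⟨rfl, by_contra fun hne => ?_⟩
  obtain ⟨p, hp, -⟩ := h'.exists_apply_eq_some h.1.le hne
  simp [h.apply_puncture] at hp

lemma not_isFlagFn {m' : ℕ} (h : IsPFlagFn S m i x) : ¬ IsFlagFn S m' x := by
  intro h'
  rcases le_or_gt i m' with him | him
  · obtain ⟨p, hp, -⟩ := h'.exists_apply_eq_some him
    simp [h.apply_puncture] at hp
  · obtain ⟨p, hp, -⟩ := h.exists_apply_eq_some le_rfl h.1.ne'
    simp [h'.apply_eq_none (him.trans h.1)] at hp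

lemma inDelta_of_low {l : ℕ} {q r : S.FaceS} (h : IsPFlagFn S (l + 2) l x)
    (hq : x (l + 1) = some q) (hr : x (l + 2) = some r) : inDelta S q r := by
  obtain ⟨-, -, y, -, hxy, hl | ⟨-, ⟨q', r', hq', hr', hqr⟩, -⟩⟩ := h
  · omega
  rw [hxy _ (by omega), hq'] at hq
  rw [hxy _ (by omega), hr'] at hr
  cases hq
  cases hr
  exact hqr

end IsPFlagFn

lemma cylProj_fl_eq (hsome : (x m).isSome) (hnone : ∀ j, m < j → x j = none) :
    cylProj S (CylFace.fl x) = x m := by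
  have hub : ∀ j ∈ {j | (x j).isSome = true}, j ≤ m := fun j hj => by
    by_contra hc
    simp [hnone j (by omega)] at hj
  have hsup : sSup {j | (x j).isSome = true} = m :=
    le_antisymm (csSup_le ⟨m, hsome⟩ hub) (le_csSup ⟨m, hub⟩ hsome)
  simp only [cylProj, hsup]

lemma exists_top_of_cylProj_eq (hx : (∃ m, IsFlagFn S m x) ∨ (∃ m i, IsPFlagFn S m i x))
    {p : S.FaceS} (hp : cylProj S (CylFace.fl x) = some p) :
    x p.1 = some p ∧ (IsFlagFn S p.1 x ∨ ∃ i, IsPFlagFn S p.1 i x) := by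
  rcases hx with ⟨m, h⟩ | ⟨m, i, h⟩
  · obtain ⟨q, hq, rfl⟩ := h.exists_apply_eq_some le_rfl
    rw [cylProj_fl_eq (by simp [hq]) (fun _ => h.apply_eq_none), hq] at hp
    cases hp
    exact ⟨hq, Or.inl h⟩
  · obtain ⟨q, hq, rfl⟩ := h.exists_apply_eq_some le_rfl h.1.ne'
    rw [cylProj_fl_eq (by simp [hq]) (fun _ => h.apply_eq_none), hq] at hp
    cases hp
    exact ⟨hq, Or.inr ⟨i, h⟩⟩

def pflagGamma (S : PHg) (m i : ℕ) (x : ℕ → Option S.FaceS) : ℕ → Option S.FaceS :=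
  if i + 2 < m then truncO m x
  else fun j => if m ≤ j then none else if j + 1 = m then (x m).map (gammaS S)
    else if j + 2 = m then none else x j

lemma pflagGamma_apply_self : pflagGamma S m i x m = none := by
  unfold pflagGamma
  split_ifs <;> simp [truncO]

lemma pflagGamma_apply_of_add_two_lt {j : ℕ} (hj : j + 2 < m) :
    pflagGamma S m i x j = x j := by
  unfold pflagGamma
  split_ifs <;> simp [truncO, show ¬ m ≤ j by omega, show j + 1 ≠ m by omega,
    show j + 2 ≠ m by omega]

lemma punctO_ne_pflagGamma (hx : x (m + 1) ≠ none) :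
    punctO m x ≠ pflagGamma S (m + 1) i y := fun h =>
  hx (by simpa [punctO, pflagGamma_apply_self] using congrFun h (m + 1))

lemma cylGamma_fl_iff_of_isFlagFn (h : IsFlagFn S (m + 1) x) (ψ : CylFace S) :
    CylGamma S ψ (CylFace.fl x) ↔ ψ = CylFace.fl (punctO m x) := by
  constructor
  · rintro (⟨m', h', ⟨hm', -⟩ | ⟨-, rfl⟩⟩ | ⟨m', i, h', -⟩)
    · have := h.unique h'
      omega
    · obtain rfl := h.unique h'
      rfl
    · exact (h'.not_isFlagFn h).elim
  · rintro rfl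
    exact Or.inl ⟨m + 1, h, Or.inr ⟨m.succ_pos, rfl⟩⟩

lemma cylGamma_fl_iff_of_isPFlagFn (h : IsPFlagFn S m i x) (ψ : CylFace S) :
    CylGamma S ψ (CylFace.fl x) ↔ ψ = CylFace.fl (pflagGamma S m i x) := by
  constructor
  · rintro (⟨m', h', -⟩ | ⟨m', i', h', ⟨hi, rfl⟩ | ⟨hi, rfl⟩⟩)
    · exact (h.not_isFlagFn h').elim
    · obtain ⟨rfl, rfl⟩ := h.unique h'
      rw [pflagGamma, if_neg (by omega)]
    · obtain ⟨rfl, rfl⟩ := h.unique h'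
      rw [pflagGamma, if_pos hi]
  · rintro rfl
    unfold pflagGamma
    split_ifs with hi
    · exact Or.inr ⟨m, i, h, Or.inr ⟨hi, rfl⟩⟩
    · exact Or.inr ⟨m, i, h, Or.inl ⟨by have := h.1; omega, rfl⟩⟩

lemma cylDelta_truncO_of_isFlagFn (h : IsFlagFn S (m + 1) x) :
    CylDelta S (CylFace.fl (truncO (m + 1) x)) (CylFace.fl x) :=
  Or.inl ⟨m + 1, h, Or.inr ⟨m.succ_pos, Or.inl rfl⟩⟩

lemma eq_truncO_or_punctO_of_cylDelta (h : IsFlagFn S (m + 1) x)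
    (hδ : CylDelta S (CylFace.fl y) (CylFace.fl x)) :
    y = truncO (m + 1) x ∨ ∃ i, i + 2 ≤ m + 1 ∧ y = punctO i x := by
  rcases hδ with ⟨m', h', hy⟩ | ⟨m', i, h', -⟩
  · obtain rfl := h.unique h'
    rcases hy with ⟨hm, -⟩ | ⟨-, hy | ⟨-, _, -, hy⟩ | ⟨-, _, -, hy⟩ | ⟨-, -, i, hi, hy⟩⟩
    · omega
    · exact Or.inl (CylFace.fl.inj hy)
    · cases hy
    · cases hy
    · exact Or.inr ⟨i, hi.1, CylFace.fl.inj hy⟩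
  · exact (h'.not_isFlagFn h).elim

lemma eq_of_isFlagFn (h : IsFlagFn S (m + 1) x) (h' : IsFlagFn S (m + 1) x')
    (htop : x (m + 1) = x' (m + 1))
    (hδ : CylDelta S (CylFace.fl (truncO (m + 1) x)) (CylFace.fl x')) : x = x' := by
  refine eq_of_truncO_eq (fun _ => h.apply_eq_none) (fun _ => h'.apply_eq_none) htop ?_
  rcases eq_truncO_or_punctO_of_cylDelta h' hδ with htr | ⟨i, hi, hpunct⟩
  · exact htr
  · obtain ⟨p, hp, -⟩ := h'.exists_apply_eq_some le_rfl
    simpa [truncO, punctO, show m + 1 ≠ i by omega, hp] using congrFun hpunct (m + 1)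

section Star

variable {p : S.FaceS} {l : ℕ} {t : S.FaceS}

lemma lowShape_apply_self (hl : l ≤ p.1) : lowShape S p l t x l = none := by
  simp [lowShape, hl.not_gt]

lemma lowShape_apply_succ (hl : l + 1 ≤ p.1) : lowShape S p l t x (l + 1) = some t := by
  simp [lowShape, show ¬ p.1 < l + 1 by omega]

lemma lowShape_apply_dim_ne_none (hl : l + 1 ≤ p.1) : lowShape S p l t x p.1 ≠ none := by
  rcases eq_or_lt_of_le hl with hl | hl
  · rw [← hl, lowShape_apply_succ (by omega)]
    simp
  · simp [lowShape, show l + 2 ≤ p.1 by omega]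

lemma StarP.fl_cases (h : StarP S m i x p (CylFace.fl y)) :
    (x p.1 = some p ∧ y = truncO (p.1 + 1) x) ∨
    ∃ l t, l + 1 ≤ p.1 ∧ l ≤ i ∧ y = lowShape S p l t x ∧ (l = i → oLeP S (x (i + 1)) t) := by
  rcases h with ⟨⟨-, hp⟩, hy⟩ | ⟨-, ⟨hi, -⟩, t, -, hle, hy⟩ | ⟨-, -, ⟨hi, hi0, -⟩, t, -, -, hy⟩
    | ⟨-, -, -, -, l, t, hli, hlp, -, -, -, hy⟩ | ⟨-, -, -, -, -, hy⟩ | ⟨-, -, -, -, -, -, hy⟩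
  · exact Or.inl ⟨hp, CylFace.fl.inj hy⟩
  · exact Or.inr ⟨i, t, hi, le_rfl, CylFace.fl.inj hy, fun _ => hle⟩
  · exact Or.inr ⟨i - 1, t, by omega, by omega, CylFace.fl.inj hy, fun _ => by omega⟩
  · exact Or.inr ⟨l, t, by omega, by omega, CylFace.fl.inj hy, fun _ => by omega⟩
  · cases hy
  · cases hy

lemma StarP.apply_dim_ne_none (h : StarP S m i x p (CylFace.fl y)) : y p.1 ≠ none := by
  rcases h.fl_cases with ⟨hp, rfl⟩ | ⟨l, t, hl, -, rfl, -⟩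
  · simp [truncO, hp]
  · exact lowShape_apply_dim_ne_none hl

end Star

lemma cylDelta_fl_of_isPFlagFn (h : IsPFlagFn S m i x)
    (hδ : CylDelta S (CylFace.fl y) (CylFace.fl x)) :
    (i + 1 = m ∧ y = truncO m x) ∨ ∃ p : S.FaceS, p.1 + 1 = m ∧ StarP S m i x p (CylFace.fl y) := by
  rcases hδ with ⟨m', h', -⟩ | ⟨m', i', h', ⟨p, q, hq, hpq, hstar⟩ | ⟨hi, hy⟩⟩
  · exact (h.not_isFlagFn h').elim
  · obtain ⟨rfl, rfl⟩ := h.unique h'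
    obtain ⟨q', hq', hdim⟩ := h.exists_apply_eq_some le_rfl h.1.ne'
    rw [hq] at hq'
    cases hq'
    exact Or.inr ⟨p, (inDelta_dim hpq).trans hdim, hstar⟩
  · obtain ⟨rfl, rfl⟩ := h.unique h'
    exact Or.inl ⟨hi, CylFace.fl.inj hy⟩

lemma cylDelta_truncO_of_high (h : IsPFlagFn S (m + 1) m x) :
    CylDelta S (CylFace.fl (truncO (m + 1) x)) (CylFace.fl x) :=
  Or.inr ⟨m + 1, m, h, Or.inr ⟨rfl, rfl⟩⟩

/-- Every star `p ⋆ x⃗` which is a punctured flag is filled at level `dim p`, whereas the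
truncation of a high punctured flag is empty there. -/
lemma eq_of_cylDelta_truncO_high {i' : ℕ} (h : IsPFlagFn S (m + 1) m x)
    (h' : IsPFlagFn S (m + 1) i' x') (htop : x (m + 1) = x' (m + 1))
    (hδ : CylDelta S (CylFace.fl (truncO (m + 1) x)) (CylFace.fl x')) : x = x' := by
  refine eq_of_truncO_eq (fun _ => h.apply_eq_none) (fun _ => h'.apply_eq_none) htop ?_
  rcases cylDelta_fl_of_isPFlagFn h' hδ with ⟨-, htr⟩ | ⟨p, hp, hstar⟩
  · exact htr
  · refine absurd ?_ hstar.apply_dim_ne_none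
    simp [truncO, show p.1 = m by omega, h.apply_puncture]

lemma cylDelta_truncO_of_low {l : ℕ} (h : IsPFlagFn S (l + 2) l x) :
    CylDelta S (CylFace.fl (truncO (l + 2) x)) (CylFace.fl x) := by
  obtain ⟨q, hq, hqd⟩ := h.exists_apply_eq_some (j := l + 1) (by omega) (by omega)
  obtain ⟨r, hr, -⟩ := h.exists_apply_eq_some (j := l + 2) le_rfl (by omega)
  refine Or.inr ⟨l + 2, l, h, Or.inl ⟨q, r, hr, h.inDelta_of_low hq hr, Or.inl ⟨?_, ?_⟩⟩⟩
  · exact ⟨by omega, hqd ▸ hq⟩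
  · rw [hqd]

lemma oLeP_of_cylDelta_truncO_low {l : ℕ} {q : S.FaceS} (h : IsPFlagFn S (l + 2) l x)
    (h' : IsPFlagFn S (l + 2) l x') (hq : x (l + 1) = some q)
    (hδ : CylDelta S (CylFace.fl (truncO (l + 2) x)) (CylFace.fl x')) :
    oLeP S (x' (l + 1)) q := by
  rcases cylDelta_fl_of_isPFlagFn h' hδ with ⟨hl, -⟩ | ⟨p, hp, hstar⟩
  · omega
  rcases hstar.fl_cases with ⟨-, htr⟩ | ⟨l₀, t, hl₀, hl₀l, hlow, hle⟩
  · have := congrFun htr (l + 1)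
    simp only [truncO, hp, if_neg (show ¬ l + 2 ≤ l + 1 by omega), hq] at this
    exact ⟨q, this.symm, Or.inl rfl⟩
  · obtain rfl : l₀ = l := by
      by_contra hne
      obtain ⟨r, hr, -⟩ := h.exists_apply_eq_some (j := l₀) (by omega) hne
      have := congrFun hlow l₀
      rw [lowShape_apply_self (by omega), truncO, if_neg (by omega), hr] at this
      cases this
    have := congrFun hlow (l₀ + 1)
    rw [lowShape_apply_succ hl₀, truncO, if_neg (by omega), hq] at this
    cases this
    exact hle rfl

lemma eq_of_isPFlagFn_low (hS : IsOpetope S) {l : ℕ} (h : IsPFlagFn S (l + 2) l x)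
    (h' : IsPFlagFn S (l + 2) l x') (htop : x (l + 2) = x' (l + 2))
    (hbelow : ∀ j < l, x j = x' j)
    (hδ : CylDelta S (CylFace.fl (truncO (l + 2) x)) (CylFace.fl x'))
    (hδ' : CylDelta S (CylFace.fl (truncO (l + 2) x')) (CylFace.fl x)) : x = x' := by
  obtain ⟨q, hq, -⟩ := h.exists_apply_eq_some (j := l + 1) (by omega) (by omega)
  obtain ⟨q', hq', -⟩ := h'.exists_apply_eq_some (j := l + 1) (by omega) (by omega)
  obtain ⟨_, hq₁, hle⟩ := oLeP_of_cylDelta_truncO_low h h' hq hδ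
  obtain ⟨_, hq₂, hle'⟩ := oLeP_of_cylDelta_truncO_low h' h hq' hδ'
  obtain rfl := Option.some.inj (hq'.symm.trans hq₁)
  obtain rfl := Option.some.inj (hq.symm.trans hq₂)
  have hqq := lePlus_antisymm hS hle' hle
  funext j
  obtain hj | rfl | rfl | rfl | hj : j < l ∨ j = l ∨ j = l + 1 ∨ j = l + 2 ∨ l + 2 < j := by
    omega
  · exact hbelow j hj
  · rw [h.apply_puncture, h'.apply_puncture]
  · rw [hq, hq', hqq]
  · exact htop
  · rw [h.apply_eq_none hj, h'.apply_eq_none hj]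

lemma eq_of_pflagGamma_eq_of_low {i' : ℕ} (h : IsPFlagFn S m i x) (h' : IsPFlagFn S m i' x')
    (hi : i + 2 < m) (htop : x m = x' m)
    (hγ : pflagGamma S m i x = pflagGamma S m i' x') : x = x' := by
  rw [pflagGamma, if_pos hi] at hγ
  refine eq_of_truncO_eq (fun _ => h.apply_eq_none) (fun _ => h'.apply_eq_none) htop ?_
  by_cases hi' : i' + 2 < m
  · rwa [pflagGamma, if_pos hi'] at hγ
  · obtain ⟨r, hr, -⟩ := h.exists_apply_eq_some (j := m - 2) (by omega) (by omega)
    have := congrFun hγ (m - 2)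
    simp [truncO, pflagGamma, hi', hr, show ¬ m ≤ m - 2 by omega, show m - 2 + 1 ≠ m by omega,
      show m - 2 + 2 = m by omega] at this

lemma eq_of_isPFlagFn (hS : IsOpetope S) {i' : ℕ} (h : IsPFlagFn S (m + 1) i x)
    (h' : IsPFlagFn S (m + 1) i' x') (htop : x (m + 1) = x' (m + 1))
    (hγ : pflagGamma S (m + 1) i x = pflagGamma S (m + 1) i' x')
    (hδ : ∀ y, CylDelta S (CylFace.fl y) (CylFace.fl x) ↔
      CylDelta S (CylFace.fl y) (CylFace.fl x')) :
    x = x' := by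
  have hi := h.1
  have hi' := h'.1
  by_cases hlow : i + 2 < m + 1
  · exact eq_of_pflagGamma_eq_of_low h h' hlow htop hγ
  by_cases hlow' : i' + 2 < m + 1
  · exact (eq_of_pflagGamma_eq_of_low h' h hlow' htop.symm hγ.symm).symm
  obtain rfl | hm : i = m ∨ i + 1 = m := by omega
  · exact eq_of_cylDelta_truncO_high h h' htop ((hδ _).1 (cylDelta_truncO_of_high h))
  obtain rfl | hm' : i' = m ∨ i' + 1 = m := by omega
  · exact (eq_of_cylDelta_truncO_high h' h htop.symm ((hδ _).2 (cylDelta_truncO_of_high h'))).symm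
  obtain rfl : i = i' := by omega
  subst hm
  refine eq_of_isPFlagFn_low hS h h' htop (fun j hj => ?_) ((hδ _).1 (cylDelta_truncO_of_low h))
    ((hδ _).2 (cylDelta_truncO_of_low h'))
  simpa only [pflagGamma_apply_of_add_two_lt (show j + 2 < i + 1 + 1 by omega)] using congrFun hγ j

end Cylinder

/-- Two (punctured) flag faces of the cylinder with the same
projection to `P_{k+1}`, the same codomain and the same domains are equal. -/
theorem cylinder_face_determined_by_boundary
    (S : PHg) (hS : IsOpetope S) (k : ℕ)
    (x x' : ℕ → Option S.FaceS)
    (hx : (∃ m, IsFlagFn S m x) ∨ (∃ m i, IsPFlagFn S m i x))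
    (hx' : (∃ m, IsFlagFn S m x') ∨ (∃ m i, IsPFlagFn S m i x'))
    (p : S.FaceS) (hp : p.1 = k + 1)
    (hproj : cylProj S (CylFace.fl x) = some p ∧ cylProj S (CylFace.fl x') = some p)
    (hdelta : ∀ ψ, CylDelta S ψ (CylFace.fl x) ↔ CylDelta S ψ (CylFace.fl x'))
    (hgamma : ∀ ψ, CylGamma S ψ (CylFace.fl x) ↔ CylGamma S ψ (CylFace.fl x')) :
    x = x' := by
  obtain ⟨htx, hx⟩ := exists_top_of_cylProj_eq hx hproj.1
  obtain ⟨htx', hx'⟩ := exists_top_of_cylProj_eq hx' hproj.2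
  rw [hp] at htx htx' hx hx'
  have htop : x (k + 1) = x' (k + 1) := htx.trans htx'.symm
  have hγ : ∀ {z z'}, (∀ ψ, CylGamma S ψ (CylFace.fl x) ↔ ψ = CylFace.fl z) →
      (∀ ψ, CylGamma S ψ (CylFace.fl x') ↔ ψ = CylFace.fl z') → z = z' :=
    fun hz hz' => CylFace.fl.inj ((hz' _).1 ((hgamma _).1 ((hz _).2 rfl)))
  rcases hx with hx | ⟨i, hx⟩ <;> rcases hx' with hx' | ⟨i', hx'⟩
  · exact eq_of_isFlagFn hx hx' htop ((hdelta _).1 (cylDelta_truncO_of_isFlagFn hx))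
  · exact absurd (hγ (cylGamma_fl_iff_of_isFlagFn hx) (cylGamma_fl_iff_of_isPFlagFn hx'))
      (punctO_ne_pflagGamma (by simp [htx]))
  · exact absurd (hγ (cylGamma_fl_iff_of_isPFlagFn hx) (cylGamma_fl_iff_of_isFlagFn hx')).symm
      (punctO_ne_pflagGamma (by simp [htx']))
  · exact eq_of_isPFlagFn hS hx hx' htop (hγ (cylGamma_fl_iff_of_isPFlagFn hx)
      (cylGamma_fl_iff_of_isPFlagFn hx')) (fun _ => hdelta _)
end
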